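/- arXiv:2206.09678 — 3 statements merged into one kernel-verified Lean document; each statement's English description precedes it below -/
import Mathlib

section
/- Let X and Y be jointly spacelike slices (i.e., X ∪ Y is spacelike) with X ∩ Y = ∅. Then X ∪ Y is both a categorical product and a categorical coproduct of X and Y in Slice, with projections π₀ = C[X] : X ∪ Y → X, π₁ = C[Y] : X ∪ Y → Y and coprojections i₀ = C[X] : X → X ∪ Y, i₁ = C[Y] : Y → X ∪ Y; the pairing of f : Z → X and f' : Z → Y is f ∪ f', and the copairing of g : X → Z and g' : Y → Z is g ∪ g'. -/
/-- An abstract setting of "points" and (future-directed causal) "curves",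
where a curve is presented by a parametrised path. -/
structure CausalSpace where
  Point : Type
  topology : TopologicalSpace Point
  Curve : Type
  dom : Curve → Set ℝ
  map : Curve → ℝ → Point

namespace CausalSpace

variable (G : CausalSpace)

/-- `γ` passes through `A` and then `B`. -/
def Passes (A B : Set G.Point) (γ : G.Curve) : Prop :=
  (∃ q ∈ G.dom γ, G.map γ q ∈ B) ∧
    ∀ q ∈ G.dom γ, G.map γ q ∈ B → ∃ p ∈ G.dom γ, p ≤ q ∧ G.map γ p ∈ A

/-- `C[A,B]`: the set of curves passing through `A` and then `B`. -/
def thru (A B : Set G.Point) : Set G.Curve := {γ | G.Passes A B γ}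

/-- Causal precedence: some future-directed causal curve goes from `x` to `y`. -/
def Prec (x y : G.Point) : Prop :=
  ∃ γ : G.Curve, ∃ p ∈ G.dom γ, ∃ q ∈ G.dom γ, p ≤ q ∧ G.map γ p = x ∧ G.map γ q = y

/-- A set is spacelike when no two distinct points of it are causally related. -/
def Spacelike (A : Set G.Point) : Prop :=
  ∀ x ∈ A, ∀ y ∈ A, x ≠ y → ¬ G.Prec x y

end CausalSpace

/-- A spacelike slice: a closed spacelike subset. -/
structure Slice (G : CausalSpace) where
  carrier : Set G.Point
  spacelike : G.Spacelike carrier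
  closed : @IsClosed G.Point G.topology carrier

/-!
Joint spacelikeness and disjointness of `X` and `Y` mean that no causal curve meets both,
so `C[X]` and `C[Y]` are disjoint sets of curves which together make up `C[X ∪ Y]`. A morphism
into or out of `X ∪ Y` therefore splits uniquely into its part meeting `X` and its part
meeting `Y`, and intersecting with `C[X]` or `C[Y]` extracts these parts.
-/

namespace Set

variable {α : Type*} {s t u v : Set α}

lemma inter_union_eq_of_subset_of_disjoint (hu : u ⊆ s) (hv : Disjoint s v) :
    s ∩ (u ∪ v) = u := by
  rw [inter_union_distrib_left, inter_eq_right.2 hu, hv.inter_eq, union_empty]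

lemma eq_union_of_subset_union_of_inter_eq {w : Set α} (hw : w ⊆ s ∪ t)
    (hs : s ∩ w = u) (ht : t ∩ w = v) : w = u ∪ v := by
  rw [← hs, ← ht, ← union_inter_distrib_right, inter_eq_right.2 hw]

end Set

namespace CausalSpace

open Set

variable {G : CausalSpace} {A B C : Set G.Point}

lemma mem_thru_self_iff {γ : G.Curve} :
    γ ∈ G.thru A A ↔ ∃ q ∈ G.dom γ, G.map γ q ∈ A :=
  ⟨fun h => h.1, fun h => ⟨h, fun q hq hqA => ⟨q, hq, le_rfl, hqA⟩⟩⟩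

lemma thru_subset_thru_self_left : G.thru A B ⊆ G.thru A A := by
  rintro γ ⟨⟨q, hq, hqB⟩, hall⟩
  obtain ⟨p, hp, -, hpA⟩ := hall q hq hqB
  exact mem_thru_self_iff.2 ⟨p, hp, hpA⟩

lemma thru_subset_thru_self_right : G.thru A B ⊆ G.thru B B :=
  fun _ h => mem_thru_self_iff.2 h.1

lemma thru_self_union : G.thru (A ∪ B) (A ∪ B) = G.thru A A ∪ G.thru B B := by
  ext γ
  simp only [mem_union, mem_thru_self_iff, and_or_left, exists_or]

lemma thru_mono_left (h : A ⊆ B) : G.thru A C ⊆ G.thru B C := by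
  rintro γ ⟨hC, hall⟩
  refine ⟨hC, fun q hq hqC => ?_⟩
  obtain ⟨p, hp, hpq, hpA⟩ := hall q hq hqC
  exact ⟨p, hp, hpq, h hpA⟩

lemma thru_subset_thru_union_right (h : Disjoint (G.thru B B) (G.thru C C)) :
    G.thru A B ⊆ G.thru A (B ∪ C) := by
  intro γ hγ
  refine ⟨hγ.1.imp fun q => And.imp_right Or.inl, fun q hq hqBC => ?_⟩
  rcases hqBC with hqB | hqC
  · exact hγ.2 q hq hqB
  · exact (h.ne_of_mem (thru_subset_thru_self_right hγ)
      (mem_thru_self_iff.2 ⟨q, hq, hqC⟩) rfl).elim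

lemma thru_subset_thru_union_left (h : Disjoint (G.thru B B) (G.thru C C)) :
    G.thru A C ⊆ G.thru A (B ∪ C) :=
  union_comm C B ▸ thru_subset_thru_union_right h.symm

/-- A curve meeting both sets would causally relate a point of `A` to a distinct point of `B`. -/
lemma disjoint_thru_self (hjs : G.Spacelike (A ∪ B)) (hAB : Disjoint A B) :
    Disjoint (G.thru A A) (G.thru B B) := by
  refine Set.disjoint_left.2 fun γ hA hB => ?_
  obtain ⟨p, hp, hpA⟩ := mem_thru_self_iff.1 hA
  obtain ⟨q, hq, hqB⟩ := mem_thru_self_iff.1 hB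
  have hne : G.map γ p ≠ G.map γ q := hAB.ne_of_mem hpA hqB
  rcases le_total p q with hpq | hqp
  · exact hjs _ (Or.inl hpA) _ (Or.inr hqB) hne ⟨γ, p, hp, q, hq, hpq, rfl, rfl⟩
  · exact hjs _ (Or.inr hqB) _ (Or.inl hpA) hne.symm ⟨γ, q, hq, p, hp, hqp, rfl, rfl⟩

end CausalSpace

open Set CausalSpace

/-- If `X` and `Y` are jointly spacelike slices with `X ∩ Y = ∅`, then `X ∪ Y`
is both a product and a coproduct of `X` and `Y` in `Slice`, with
(co)projections `C[X]` and `C[Y]`, pairing `f ∪ f'` and copairing `g ∪ g'`. -/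
theorem slice_product_coproduct (G : CausalSpace) (X Y : Slice G)
    (hjs : G.Spacelike (X.carrier ∪ Y.carrier))
    (hdisj : X.carrier ∩ Y.carrier = ∅) :
    -- the (co)projections are well-typed morphisms
    (G.thru X.carrier X.carrier ⊆ G.thru (X.carrier ∪ Y.carrier) X.carrier) ∧
    (G.thru Y.carrier Y.carrier ⊆ G.thru (X.carrier ∪ Y.carrier) Y.carrier) ∧
    (G.thru X.carrier X.carrier ⊆ G.thru X.carrier (X.carrier ∪ Y.carrier)) ∧
    (G.thru Y.carrier Y.carrier ⊆ G.thru Y.carrier (X.carrier ∪ Y.carrier)) ∧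
    -- product universal property
    (∀ (Z : Slice G) (f f' : Set G.Curve),
      f ⊆ G.thru Z.carrier X.carrier → f' ⊆ G.thru Z.carrier Y.carrier →
      (f ∪ f' ⊆ G.thru Z.carrier (X.carrier ∪ Y.carrier)) ∧
      G.thru X.carrier X.carrier ∩ (f ∪ f') = f ∧
      G.thru Y.carrier Y.carrier ∩ (f ∪ f') = f' ∧
      ∀ u : Set G.Curve, u ⊆ G.thru Z.carrier (X.carrier ∪ Y.carrier) →
        G.thru X.carrier X.carrier ∩ u = f → G.thru Y.carrier Y.carrier ∩ u = f' →
        u = f ∪ f') ∧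
    -- coproduct universal property
    (∀ (Z : Slice G) (g g' : Set G.Curve),
      g ⊆ G.thru X.carrier Z.carrier → g' ⊆ G.thru Y.carrier Z.carrier →
      (g ∪ g' ⊆ G.thru (X.carrier ∪ Y.carrier) Z.carrier) ∧
      (g ∪ g') ∩ G.thru X.carrier X.carrier = g ∧
      (g ∪ g') ∩ G.thru Y.carrier Y.carrier = g' ∧
      ∀ v : Set G.Curve, v ⊆ G.thru (X.carrier ∪ Y.carrier) Z.carrier →
        v ∩ G.thru X.carrier X.carrier = g → v ∩ G.thru Y.carrier Y.carrier = g' →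
        v = g ∪ g') := by
  have hsep : Disjoint (G.thru X.carrier X.carrier) (G.thru Y.carrier Y.carrier) :=
    disjoint_thru_self hjs (disjoint_iff_inter_eq_empty.2 hdisj)
  refine ⟨thru_mono_left subset_union_left, thru_mono_left subset_union_right,
    thru_subset_thru_union_right hsep, thru_subset_thru_union_left hsep, ?_, ?_⟩
  · intro Z f f' hf hf'
    have hfX := hf.trans thru_subset_thru_self_right
    have hf'Y := hf'.trans thru_subset_thru_self_right
    refine ⟨union_subset (hf.trans (thru_subset_thru_union_right hsep))
        (hf'.trans (thru_subset_thru_union_left hsep)),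
      inter_union_eq_of_subset_of_disjoint hfX (hsep.mono_right hf'Y), ?_, fun u hu hX hY =>
        eq_union_of_subset_union_of_inter_eq
          (thru_self_union ▸ hu.trans thru_subset_thru_self_right) hX hY⟩
    rw [union_comm]
    exact inter_union_eq_of_subset_of_disjoint hf'Y (hsep.symm.mono_right hfX)
  · intro Z g g' hg hg'
    have hgX := hg.trans thru_subset_thru_self_left
    have hg'Y := hg'.trans thru_subset_thru_self_left
    refine ⟨union_subset (hg.trans (thru_mono_left subset_union_left))
        (hg'.trans (thru_mono_left subset_union_right)), ?_, ?_, fun v hv hX hY =>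
      eq_union_of_subset_union_of_inter_eq
        (thru_self_union ▸ hv.trans thru_subset_thru_self_left)
        (inter_comm v _ ▸ hX) (inter_comm v _ ▸ hY)⟩
    · rw [inter_comm]
      exact inter_union_eq_of_subset_of_disjoint hgX (hsep.mono_right hg'Y)
    · rw [inter_comm, union_comm]
      exact inter_union_eq_of_subset_of_disjoint hg'Y (hsep.symm.mono_right hgX)
end

section
/- If X and Y are jointly spacelike slices, then for every slice Z one has C[Z,X] ∩ C[Z,Y] = C[Z, X ∩ Y], and hence the presheaf (X ⊛∧ Y)(−) = P(C[−,X] ∩ C[−,Y]) is representable, represented by the slice X ∩ Y: (X ⊛∧ Y)(Z) = Slice(Z, X ∩ Y). -/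
namespace CausalSpace

variable {G : CausalSpace} {A B C : Set G.Point}

theorem Spacelike.mono (hB : G.Spacelike B) (hAB : A ⊆ B) : G.Spacelike A :=
  fun x hx y hy => hB x (hAB hx) y (hAB hy)

theorem Spacelike.map_eq (hA : G.Spacelike A) {γ : G.Curve} {p q : ℝ}
    (hp : p ∈ G.dom γ) (hq : q ∈ G.dom γ) (hpA : G.map γ p ∈ A) (hqA : G.map γ q ∈ A) :
    G.map γ p = G.map γ q := by
  by_contra hne
  rcases le_total p q with hpq | hqp
  · exact hA _ hpA _ hqA hne ⟨γ, p, hp, q, hq, hpq, rfl, rfl⟩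
  · exact hA _ hqA _ hpA (Ne.symm hne) ⟨γ, q, hq, p, hp, hqp, rfl, rfl⟩

/-- A point of `B` on the curve before its point in `C` is that same point, as `B` is spacelike. -/
theorem thru_subset_thru_of_spacelike (hB : G.Spacelike B) (hCB : C ⊆ B) :
    G.thru A C ⊆ G.thru A B := by
  rintro γ ⟨⟨q₀, hq₀, hq₀C⟩, hC⟩
  refine ⟨⟨q₀, hq₀, hCB hq₀C⟩, fun q hq hqB => ?_⟩
  rcases le_total q₀ q with hq₀q | hqq₀
  · obtain ⟨p, hp, hpq₀, hpA⟩ := hC q₀ hq₀ hq₀C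
    exact ⟨p, hp, hpq₀.trans hq₀q, hpA⟩
  · have hqC : G.map γ q ∈ C := hB.map_eq hq hq₀ hqB (hCB hq₀C) ▸ hq₀C
    exact hC q hq hqC

/-- The points where a curve meets `B` and `C` coincide, as `B ∪ C` is spacelike. -/
theorem thru_inter_thru_subset_of_spacelike_union (hBC : G.Spacelike (B ∪ C)) :
    G.thru A B ∩ G.thru A C ⊆ G.thru A (B ∩ C) := by
  rintro γ ⟨⟨⟨q₁, hq₁, hq₁B⟩, hB⟩, ⟨⟨q₂, hq₂, hq₂C⟩, -⟩⟩
  have hq₁C : G.map γ q₁ ∈ C := (hBC.map_eq hq₁ hq₂ (Or.inl hq₁B) (Or.inr hq₂C)).symm ▸ hq₂C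
  exact ⟨⟨q₁, hq₁, hq₁B, hq₁C⟩, fun q hq hqBC => hB q hq hqBC.1⟩

theorem thru_inter_thru_eq_of_spacelike_union (hBC : G.Spacelike (B ∪ C)) :
    G.thru A B ∩ G.thru A C = G.thru A (B ∩ C) :=
  (thru_inter_thru_subset_of_spacelike_union hBC).antisymm <| Set.subset_inter
    (thru_subset_thru_of_spacelike (hBC.mono Set.subset_union_left) Set.inter_subset_left)
    (thru_subset_thru_of_spacelike (hBC.mono Set.subset_union_right) Set.inter_subset_right)

end CausalSpace

/-- If `X` and `Y` are jointly spacelike slices then `X ∩ Y` is again a slice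
and for every slice `Z`, `C[Z,X] ∩ C[Z,Y] = C[Z, X ∩ Y]`; hence the presheaf
`(X ⊛∧ Y)(−) = 𝒫(C[−,X] ∩ C[−,Y])` is representable, represented by `X ∩ Y`. -/
theorem conj_representable_of_jointly_spacelike (G : CausalSpace) (X Y : Slice G)
    (hjs : G.Spacelike (X.carrier ∪ Y.carrier)) :
    G.Spacelike (X.carrier ∩ Y.carrier) ∧
    @IsClosed G.Point G.topology (X.carrier ∩ Y.carrier) ∧
    ∀ Z : Slice G,
      G.thru Z.carrier X.carrier ∩ G.thru Z.carrier Y.carrier =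
        G.thru Z.carrier (X.carrier ∩ Y.carrier) :=
  letI := G.topology
  ⟨X.spacelike.mono Set.inter_subset_left, X.closed.inter Y.closed,
    fun _ => CausalSpace.thru_inter_thru_eq_of_spacelike_union hjs⟩
end

section
/- The assignments (X,Y) ↦ (X ⊛∨ Y)(−) with left action S ↦ (C ↦ C ∩ (S ∪ C[Y])) and right action T ↦ (C ↦ C ∩ (C[X] ∪ T)) are functorial in each variable separately: (S' ⊛∨ Y) ∘ (S ⊛∨ Y) = (S'∘S) ⊛∨ Y and (X ⊛∨ T') ∘ (X ⊛∨ T) = X ⊛∨ (T'∘T), and identities act as identities; hence they define a functor Slice □ Slice → [Sliceᵒᵖ, Set] out of the funny tensor product. -/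
namespace CausalSpace

variable (G : CausalSpace)

theorem thru_subset_thru_self (A B : Set G.Point) : G.thru A B ⊆ G.thru B B :=
  fun _ ⟨⟨q, hq, hqB⟩, _⟩ => ⟨⟨q, hq, hqB⟩, fun r hr hrB => ⟨r, hr, le_rfl, hrB⟩⟩

theorem thru_union_thru_subset_thru_self_union (Z A B : Set G.Point) :
    G.thru Z A ∪ G.thru Z B ⊆ G.thru A A ∪ G.thru B B :=
  Set.union_subset_union (G.thru_subset_thru_self Z A) (G.thru_subset_thru_self Z B)

end CausalSpace

namespace Set

variable {α : Type*}

theorem inter_union_right_inter_union_right (C S S' U : Set α) :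
    C ∩ (S ∪ U) ∩ (S' ∪ U) = C ∩ (S' ∩ S ∪ U) := by
  rw [inter_assoc, inter_comm (S ∪ U), inter_union_distrib_right]

theorem inter_union_left_inter_union_left (C T T' U : Set α) :
    C ∩ (U ∪ T) ∩ (U ∪ T') = C ∩ (U ∪ T' ∩ T) := by
  rw [inter_assoc, inter_comm (U ∪ T), union_inter_distrib_left]

end Set

/-- The left action `S ↦ (C ↦ C ∩ (S ∪ C[Y]))` and right action
`T ↦ (C ↦ C ∩ (C[X] ∪ T))` on `(X ⊛∨ Y)(Z) = 𝒫(C[Z,X] ∪ C[Z,Y])` are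
functorial in each variable separately, with identities acting as identities;
hence they define a functor `Slice □ Slice → [Sliceᵒᵖ, Set]` out of the funny
tensor product of `Slice` with itself. -/
theorem disj_funny_functor (G : CausalSpace) (X Y : Slice G) :
    -- identities act as identities (1_X ⊛∨ Y and X ⊛∨ 1_Y are both C ↦ C ∩ (C[X] ∪ C[Y]))
    (∀ Z : Slice G, ∀ C : Set G.Curve,
      C ⊆ G.thru Z.carrier X.carrier ∪ G.thru Z.carrier Y.carrier →
        C ∩ (G.thru X.carrier X.carrier ∪ G.thru Y.carrier Y.carrier) = C) ∧
    -- functoriality of the left action: (S' ⊛∨ Y) ∘ (S ⊛∨ Y) = (S'∘S) ⊛∨ Y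
    (∀ (X' X'' : Slice G) (S S' : Set G.Curve),
      S ⊆ G.thru X.carrier X'.carrier → S' ⊆ G.thru X'.carrier X''.carrier →
      ∀ Z : Slice G, ∀ C : Set G.Curve,
        C ⊆ G.thru Z.carrier X.carrier ∪ G.thru Z.carrier Y.carrier →
          (C ∩ (S ∪ G.thru Y.carrier Y.carrier)) ∩ (S' ∪ G.thru Y.carrier Y.carrier) =
            C ∩ ((S' ∩ S) ∪ G.thru Y.carrier Y.carrier)) ∧
    -- functoriality of the right action: (X ⊛∨ T') ∘ (X ⊛∨ T) = X ⊛∨ (T'∘T)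
    (∀ (Y' Y'' : Slice G) (T T' : Set G.Curve),
      T ⊆ G.thru Y.carrier Y'.carrier → T' ⊆ G.thru Y'.carrier Y''.carrier →
      ∀ Z : Slice G, ∀ C : Set G.Curve,
        C ⊆ G.thru Z.carrier X.carrier ∪ G.thru Z.carrier Y.carrier →
          (C ∩ (G.thru X.carrier X.carrier ∪ T)) ∩ (G.thru X.carrier X.carrier ∪ T') =
            C ∩ (G.thru X.carrier X.carrier ∪ (T' ∩ T))) := by
  refine ⟨fun Z C hC => ?_, fun _ _ S S' _ _ _ C _ => ?_, fun _ _ T T' _ _ _ C _ => ?_⟩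
  · exact Set.inter_eq_left.mpr (hC.trans (G.thru_union_thru_subset_thru_self_union _ _ _))
  · exact Set.inter_union_right_inter_union_right C S S' _
  · exact Set.inter_union_left_inter_union_left C T T' _
end
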